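/- arXiv:2505.07536 — 6 statements merged into one kernel-verified Lean document; each statement's English description precedes it below -/
import Mathlib

section
/- Let p be a prime, let t ≥ 1, let s ∈ ZMod p, and let x : Fin t → ZMod p be injective with x i ≠ 0 for all i. Consider the probability mass function obtained by sampling coefficients a : Fin t → ZMod p uniformly at random and outputting the tuple of shares (s + ∑_{k ∈ Fin t} a k · (x i)^{k+1})_{i ∈ Fin t}; that is, the pushforward under the share map of the uniform PMF on Fin t → ZMod p. This pushforward equals the uniform PMF on Fin t → ZMod p. In particular it does not depend on the secret s. -/
open Finset

lemma pmf_map_uniform_of_bijective {α : Type*} [Fintype α] [Nonempty α]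
    {f : α → α} (hf : Function.Bijective f) :
    PMF.map f (PMF.uniformOfFintype α) = PMF.uniformOfFintype α := by
  classical
  ext b
  obtain ⟨a, rfl⟩ := hf.surjective b
  rw [PMF.map_apply, tsum_eq_single a ?_]
  · simp
  · intro a' h
    simp only [ite_eq_right_iff]
    intro hb
    exact absurd (hf.injective hb.symm) h

/-- Information-theoretic privacy of Shamir sharing over `ZMod p`: with uniformly random
coefficients `a`, the tuple of shares `(s + ∑_k a k · (x i)^(k+1))_i` at `t` points is
uniformly distributed, independent of the secret `s`. -/
theorem shamir_shares_uniform
    (p : ℕ) [Fact p.Prime] (t : ℕ) (ht : 1 ≤ t)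
    (s : ZMod p) (x : Fin t → ZMod p) (hx : Function.Injective x) (hx0 : ∀ i, x i ≠ 0) :
    PMF.map
        (fun a : Fin t → ZMod p => fun i : Fin t => s + ∑ k, a k * (x i) ^ ((k : ℕ) + 1))
        (PMF.uniformOfFintype (Fin t → ZMod p))
      = PMF.uniformOfFintype (Fin t → ZMod p) := by
  have : Nonempty (Fin t) := ⟨⟨0, ht⟩⟩
  apply pmf_map_uniform_of_bijective
  set M : Matrix (Fin t) (Fin t) (ZMod p) :=
    Matrix.of (fun i k : Fin t => (x i) ^ ((k : ℕ) + 1)) with hM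
  have hMdet : IsUnit M.det := by
    have hMeq : M = Matrix.diagonal x * Matrix.vandermonde x := by
      ext i k
      simp [hM, Matrix.vandermonde, Matrix.diagonal, Matrix.mul_apply, pow_succ,
        Finset.sum_ite_eq, mul_comm]
    rw [hMeq, Matrix.det_mul, Matrix.det_diagonal]
    refine (IsUnit.mul ?_ ?_)
    · exact (Finset.prod_ne_zero_iff.2 fun i _ => hx0 i).isUnit
    · rw [isUnit_iff_ne_zero, Ne, Matrix.det_vandermonde_eq_zero_iff]
      rintro ⟨i, j, hij, hne⟩
      exact hne (hx hij)
  have hmv : Function.Bijective (M.mulVec) :=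
    (Finite.injective_iff_bijective).1 (Matrix.mulVec_injective_iff_isUnit.2 ((Matrix.isUnit_iff_isUnit_det M).2 hMdet))
  have hfeq : (fun a : Fin t → ZMod p => fun i : Fin t => s + ∑ k, a k * (x i) ^ ((k : ℕ) + 1))
      = (fun v : Fin t → ZMod p => fun i => s + v i) ∘ M.mulVec := by
    funext a
    funext i
    simp [Matrix.mulVec, dotProduct, hM, mul_comm]
  rw [hfeq]
  exact (Function.Bijective.comp
    (⟨fun v w h => by funext i; have := congrFun h i; simpa using this,
      fun v => ⟨fun i => v i - s, by funext i; simp⟩⟩) hmv)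
end

section
/- Let F be a field, let n ≥ 2, let x : Fin n → F be injective, and set v i = ∏_{j ≠ i} (x i − x j)⁻¹ for each i ∈ Fin n. Then for every polynomial g over F of degree at most n − 2, ∑_{i ∈ Fin n} v i · g(x i) = 0. -/
open Polynomial Finset

/-- SCRAPE dual-code identity: with `v i = ∏_{j ≠ i} (x i - x j)⁻¹` for distinct points
`x 1, …, x n`, every polynomial `g` of degree at most `n - 2` satisfies
`∑ i, v i · g(x i) = 0`. -/
theorem scrape_dual_sum
    {F : Type*} [Field F] (n : ℕ) (hn : 2 ≤ n)
    (x : Fin n → F) (hx : Function.Injective x)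
    (v : Fin n → F) (hv : ∀ i, v i = ∏ j ∈ Finset.univ.erase i, (x i - x j)⁻¹)
    (g : F[X]) (hg : g.degree ≤ (n - 2 : ℕ)) :
    ∑ i, v i * g.eval (x i) = 0 := by
  have hcard : #(Finset.univ : Finset (Fin n)) = n := by simp
  have hdlt : g.degree < #(Finset.univ : Finset (Fin n)) := by
    rw [hcard]
    exact lt_of_le_of_lt hg (by exact_mod_cast Nat.sub_lt (by omega) (by norm_num))
  have hinj : Set.InjOn x (Finset.univ : Finset (Fin n)) := hx.injOn
  have key : g = Lagrange.interpolate Finset.univ x (fun i => g.eval (x i)) :=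
    Lagrange.eq_interpolate hinj hdlt
  -- coefficient of degree n-1 of g is zero
  have h0 : g.coeff (n - 1) = 0 := by
    apply coeff_eq_zero_of_degree_lt
    exact lt_of_le_of_lt hg (by exact_mod_cast Nat.sub_lt_sub_left (by omega) (by norm_num))
  -- basis polynomial has coefficient nodalWeight at degree n-1
  have hbasis : ∀ i : Fin n, (Lagrange.basis Finset.univ x i).coeff (n - 1)
      = Lagrange.nodalWeight Finset.univ x i := by
    intro i
    rw [Lagrange.basis_eq_prod_sub_inv_mul_nodal_div (mem_univ i),
      ← Lagrange.nodal_erase_eq_nodal_div (mem_univ i), coeff_C_mul]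
    have hmonic : (Lagrange.nodal (Finset.univ.erase i) x).Monic := Lagrange.nodal_monic
    have hdeg : (Lagrange.nodal (Finset.univ.erase i) x).natDegree = n - 1 := by
      rw [Lagrange.natDegree_nodal, card_erase_of_mem (mem_univ i), hcard]
    rw [← hdeg, hmonic.coeff_natDegree, mul_one]
  have := congrArg (fun p => p.coeff (n - 1)) key
  simp only [h0, Lagrange.interpolate_apply, finset_sum_coeff, coeff_C_mul, hbasis] at this
  rw [this]
  apply Finset.sum_congr rfl
  intro i _
  rw [hv i, Lagrange.nodalWeight, mul_comm]
end

section
/- Let F be a field, let t, n be natural numbers with t + 2 ≤ n, let x : Fin n → F be injective, and set v i = ∏_{j ≠ i} (x i − x j)⁻¹. Then for every vector m : Fin n → F, the following are equivalent: (i) there exists a polynomial p over F of degree at most t with m i = p(x i) for all i; (ii) for every polynomial f over F of degree at most n − t − 2, ∑_{i ∈ Fin n} v i · f(x i) · m i = 0. -/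
open Polynomial Finset

lemma scrape_coeff_lagrange_basis {F : Type*} [Field F] {n : ℕ} (x : Fin n → F) (i : Fin n) :
    (Lagrange.basis Finset.univ x i).coeff (n-1) =
      ∏ j ∈ Finset.univ.erase i, (x i - x j)⁻¹ := by
  unfold Lagrange.basis Lagrange.basisDivisor
  rw [Finset.prod_mul_distrib, ← map_prod]
  set P : Polynomial F := ∏ j ∈ Finset.univ.erase i, (X - C (x j)) with hP
  have hmon : P.Monic := monic_prod_of_monic _ _ fun j _ => monic_X_sub_C _
  have hdeg : P.natDegree = n - 1 := by
    rw [hP, natDegree_prod_of_monic _ _ fun j _ => monic_X_sub_C _]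
    simp [Finset.card_erase_of_mem]
  rw [coeff_C_mul, ← hdeg, hmon.coeff_natDegree, mul_one]

lemma scrape_sum_v_eval {F : Type*} [Field F] {n : ℕ} (x : Fin n → F)
    (hx : Function.Injective x) (g : Polynomial F) (hg : g.degree < (n : WithBot ℕ)) :
    ∑ i, (∏ j ∈ Finset.univ.erase i, (x i - x j)⁻¹) * g.eval (x i) = g.coeff (n-1) := by
  have hinj : Set.InjOn x ↑(Finset.univ : Finset (Fin n)) := hx.injOn
  have hcard : (Finset.univ : Finset (Fin n)).card = n := by simp
  have heq := Lagrange.eq_interpolate (v := x) (f := g) hinj (by rwa [hcard])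
  conv_rhs => rw [heq]
  rw [Lagrange.interpolate_apply, finset_sum_coeff]
  refine Finset.sum_congr rfl fun i _ => ?_
  rw [coeff_C_mul, scrape_coeff_lagrange_basis, mul_comm]

/-- SCRAPE characterization of valid Shamir share vectors: `m` is a Reed–Solomon codeword
(i.e. `m i = p(x i)` for some polynomial `p` of degree at most `t`) if and only if it is
orthogonal to all dual codewords `(v i · f(x i))_i` with `deg f ≤ n - t - 2`, where
`v i = ∏_{j ≠ i} (x i - x j)⁻¹`. -/
theorem scrape_share_check
    {F : Type*} [Field F] (t n : ℕ) (htn : t + 2 ≤ n)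
    (x : Fin n → F) (hx : Function.Injective x)
    (v : Fin n → F) (hv : ∀ i, v i = ∏ j ∈ Finset.univ.erase i, (x i - x j)⁻¹)
    (m : Fin n → F) :
    (∃ p : F[X], p.degree ≤ t ∧ ∀ i, m i = p.eval (x i)) ↔
      (∀ f : F[X], f.degree ≤ (n - t - 2 : ℕ) →
        ∑ i, v i * f.eval (x i) * m i = 0) := by
  constructor
  · rintro ⟨p, hpd, hpm⟩ f hf
    have hle : (f * p).degree ≤ ((n - 2 : ℕ) : WithBot ℕ) := by
      refine (degree_mul_le _ _).trans ?_
      calc f.degree + p.degree ≤ ((n - t - 2 : ℕ) : WithBot ℕ) + (t : ℕ) :=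
            add_le_add hf hpd
        _ = ((n - t - 2 + t : ℕ) : WithBot ℕ) := by norm_cast
        _ = ((n - 2 : ℕ) : WithBot ℕ) := by congr 1; omega
    have hlt : (f * p).degree < (n : WithBot ℕ) :=
      lt_of_le_of_lt hle (Nat.cast_lt.mpr (by omega))
    have h3 := scrape_sum_v_eval x hx (f * p) hlt
    have hc : (f * p).coeff (n - 1) = 0 :=
      coeff_eq_zero_of_degree_lt (lt_of_le_of_lt hle (Nat.cast_lt.mpr (by omega)))
    calc ∑ i, v i * f.eval (x i) * m i
        = ∑ i, (∏ j ∈ Finset.univ.erase i, (x i - x j)⁻¹) * (f * p).eval (x i) := by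
          refine Finset.sum_congr rfl fun i _ => ?_
          rw [hv, eval_mul, ← hpm i, mul_assoc]
      _ = 0 := by rw [h3, hc]
  · intro h
    set p : F[X] := Lagrange.interpolate Finset.univ x m with hp
    have hinj : Set.InjOn x ↑(Finset.univ : Finset (Fin n)) := hx.injOn
    have hpm : ∀ i, p.eval (x i) = m i := fun i =>
      Lagrange.eval_interpolate_at_node m hinj (Finset.mem_univ i)
    have hpdeg : p.degree < (n : WithBot ℕ) := by
      have := Lagrange.degree_interpolate_lt (r := m) hinj
      rw [hp]
      simpa using this
    have key : ∀ d : ℕ, ∀ k : ℕ, t < k → n - 1 = k + d → p.coeff k = 0 := by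
      intro d
      induction d using Nat.strong_induction_on with
      | _ d IH =>
        intro k htk hkd
        have hdegk : p.degree ≤ (k : WithBot ℕ) := by
          rw [degree_le_iff_coeff_zero]
          intro b hb
          rw [Nat.cast_lt] at hb
          by_cases hbn : n ≤ b
          · exact coeff_eq_zero_of_degree_lt (lt_of_lt_of_le hpdeg (Nat.cast_le.mpr hbn))
          · exact IH (n - 1 - b) (by omega) b (by omega) (by omega)
        set e := n - 1 - k with he
        have hsum := h (X ^ e) (by
          rw [degree_X_pow]; exact Nat.cast_le.mpr (by omega))
        have hle : ((X : F[X]) ^ e * p).degree ≤ ((n - 1 : ℕ) : WithBot ℕ) := by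
          refine (degree_mul_le _ _).trans ?_
          rw [degree_X_pow]
          calc (e : WithBot ℕ) + p.degree ≤ (e : WithBot ℕ) + (k : ℕ) :=
                add_le_add le_rfl hdegk
            _ = ((e + k : ℕ) : WithBot ℕ) := by norm_cast
            _ = ((n - 1 : ℕ) : WithBot ℕ) := by congr 1; omega
        have hlt : ((X : F[X]) ^ e * p).degree < (n : WithBot ℕ) :=
          lt_of_le_of_lt hle (Nat.cast_lt.mpr (by omega))
        have h3 := scrape_sum_v_eval x hx ((X : F[X]) ^ e * p) hlt
        have h2 : ∑ i, (∏ j ∈ Finset.univ.erase i, (x i - x j)⁻¹) *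
            ((X : F[X]) ^ e * p).eval (x i) = ∑ i, v i * ((X : F[X]) ^ e).eval (x i) * m i := by
          refine Finset.sum_congr rfl fun i _ => ?_
          rw [hv, eval_mul, hpm i, mul_assoc]
        have h4 : ((X : F[X]) ^ e * p).coeff (n - 1) = p.coeff k := by
          rw [show n - 1 = k + e by omega, coeff_X_pow_mul]
        rw [← h4, ← h3, h2, hsum]
    have hdt : p.degree ≤ (t : WithBot ℕ) := by
      rw [degree_le_iff_coeff_zero]
      intro b hb
      rw [Nat.cast_lt] at hb
      by_cases hbn : n ≤ b
      · exact coeff_eq_zero_of_degree_lt (lt_of_lt_of_le hpdeg (Nat.cast_le.mpr hbn))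
      · exact key (n - 1 - b) b hb (by omega)
    exact ⟨p, hdt, fun i => (hpm i).symm⟩
end

section
/- Let F be a field, let t, n be natural numbers with t + 2 ≤ n, and let x : Fin n → F be injective. Then there exists a matrix H : Matrix (Fin n) (Fin (n − t − 1)) F such that for every vector m : Fin n → F, m is a Shamir share vector (i.e. there exists a polynomial p over F of degree at most t with m i = p(x i) for all i) if and only if the vector-matrix product mᵀ · H is the zero vector in F^(n−t−1). -/
open Polynomial

/-- Existence of a parity-check matrix for Shamir share vectors: there is a matrix
`H : F^{n × (n - t - 1)}` such that `m` is a valid share vector of some secret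
(i.e. `m i = p(x i)` for some polynomial `p` of degree at most `t`) if and only if
`mᵀ · H = 0`. -/
theorem shamir_parity_check_matrix_exists
    {F : Type*} [Field F] (t n : ℕ) (htn : t + 2 ≤ n)
    (x : Fin n → F) (hx : Function.Injective x) :
    ∃ H : Matrix (Fin n) (Fin (n - t - 1)) F,
      ∀ m : Fin n → F,
        (∃ p : F[X], p.degree ≤ t ∧ ∀ i, m i = p.eval (x i)) ↔
          Matrix.vecMul m H = 0 := by
  classical
  -- the evaluation map, restricted to polynomials of degree < t+1
  set L : ↥(Polynomial.degreeLT F (t + 1)) →ₗ[F] (Fin n → F) :=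
    (LinearMap.pi fun i => Polynomial.leval (x i)).comp
      (Polynomial.degreeLT F (t + 1)).subtype with hL
  set V : Submodule F (Fin n → F) := LinearMap.range L with hVdef
  have hmem : ∀ m : Fin n → F,
      (∃ p : F[X], p.degree ≤ t ∧ ∀ i, m i = p.eval (x i)) ↔ m ∈ V := by
    intro m
    constructor
    · rintro ⟨p, hp, hm⟩
      refine ⟨⟨p, Polynomial.mem_degreeLT.2 ?_⟩, ?_⟩
      · refine lt_of_le_of_lt hp ?_
        exact_mod_cast Nat.lt_succ_self t
      · funext i
        simpa [hL] using (hm i).symm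
    · rintro ⟨⟨p, hp⟩, rfl⟩
      refine ⟨p, ?_, fun i => rfl⟩
      have := Polynomial.mem_degreeLT.1 hp
      rcases le_or_gt p.degree t with h | h
      · exact h
      · exfalso
        have hp0 : p ≠ 0 := fun h0 => by simp [h0] at h
        rw [Polynomial.degree_eq_natDegree hp0] at this h
        have h1 : t < p.natDegree := by exact_mod_cast h
        have h2 : p.natDegree < t + 1 := by exact_mod_cast this
        omega
  -- L is injective
  have hLinj : Function.Injective L := by
    rw [← LinearMap.ker_eq_bot, LinearMap.ker_eq_bot']
    rintro ⟨p, hp⟩ hLp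
    have hev : ∀ i, p.eval (x i) = 0 := fun i => congrFun hLp i
    have hdeg : p.natDegree < Fintype.card (Fin n) := by
      rcases eq_or_ne p 0 with rfl | hp0
      · simpa using (by omega : 0 < n)
      · have := Polynomial.mem_degreeLT.1 hp
        rw [Polynomial.degree_eq_natDegree hp0] at this
        have : p.natDegree < t + 1 := by exact_mod_cast this
        simp only [Fintype.card_fin]
        omega
    have : p = 0 := Polynomial.eq_zero_of_natDegree_lt_card_of_eval_eq_zero p hx hev hdeg
    exact Subtype.ext this
  have hVrank : Module.finrank F V = t + 1 := by
    rw [hVdef, LinearMap.finrank_range_of_inj hLinj,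
      (Polynomial.degreeLTEquiv F (t + 1)).finrank_eq, Module.finrank_fin_fun]
  have hQrank : Module.finrank F ((Fin n → F) ⧸ V) = n - t - 1 := by
    have h := V.finrank_quotient_add_finrank
    rw [hVrank, Module.finrank_fin_fun] at h
    omega
  let b : Module.Basis (Fin (n - t - 1)) F ((Fin n → F) ⧸ V) := Module.finBasisOfFinrankEq F _ hQrank
  let ℓ : Fin (n - t - 1) → ((Fin n → F) →ₗ[F] F) := fun j => (b.coord j).comp V.mkQ
  refine ⟨fun i j => ℓ j (Pi.single i 1), fun m => ?_⟩
  have key : ∀ j, Matrix.vecMul m (fun i j => ℓ j (Pi.single i 1)) j = ℓ j m := by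
    intro j
    rw [LinearMap.pi_apply_eq_sum_univ (ℓ j) m]
    simp only [Matrix.vecMul, dotProduct, smul_eq_mul]
    refine Finset.sum_congr rfl fun i _ => ?_
    have hs : (Pi.single i 1 : Fin n → F) = fun j => if i = j then 1 else 0 := by
      funext k
      rcases eq_or_ne i k with rfl | h
      · simp
      · simp [Pi.single_eq_of_ne (Ne.symm h), h]
    simp only [hs]
  rw [hmem]
  constructor
  · intro hm
    funext j
    rw [key j]
    have : V.mkQ m = 0 := (Submodule.Quotient.mk_eq_zero V).2 hm
    simp [ℓ, this]
  · intro h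
    have hz : ∀ j, b.coord j (V.mkQ m) = 0 := by
      intro j
      have := congrFun h j
      rw [key j] at this
      simpa [ℓ] using this
    have : V.mkQ m = 0 := (b.forall_coord_eq_zero_iff).1 hz
    exact (Submodule.Quotient.mk_eq_zero V).1 this
end

section
/- Let p be an odd prime, let z be an integer with |z| ≤ (p − 1)/2, and let m : ZMod p. Set w = ((z + p · (m.val : ℤ) : ℤ) : ZMod (p²)). Then Int.bmod ((w.val : ℤ)) p = z, and the decoded value satisfies ((((w.val : ℤ) − Int.bmod ((w.val : ℤ)) p) / p : ℤ) : ZMod p) = m. -/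
/-- ACPS decoding: for an odd prime `p`, a noise term `z` with `|z| ≤ (p-1)/2`, and a
message `m ∈ ZMod p` hidden as `w = z + p·m` modulo `p²`, the balanced residue
`Int.bmod` recovers `z`, and `(w - z)/p (mod p)` recovers `m`. -/
theorem acps_decode
    (p : ℕ) (hp : p.Prime) (hodd : Odd p)
    (z : ℤ) (hz : |z| ≤ ((p : ℤ) - 1) / 2) (m : ZMod p)
    (w : ZMod (p ^ 2))
    (hw : w = ((z + (p : ℤ) * (m.val : ℤ) : ℤ) : ZMod (p ^ 2))) :
    Int.bmod (w.val : ℤ) p = z ∧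
      ((((w.val : ℤ) - Int.bmod (w.val : ℤ) p) / p : ℤ) : ZMod p) = m := by
  have hp1 : (1 : ℕ) < p := hp.one_lt
  have hpz : (0 : ℤ) < (p : ℤ) := by exact_mod_cast hp.pos
  haveI : NeZero (p ^ 2) := ⟨pow_ne_zero 2 hp.pos.ne'⟩
  have hodd' : (p : ℤ) % 2 = 1 := by
    obtain ⟨k, hk⟩ := hodd; omega
  set a : ℤ := z + (p : ℤ) * (m.val : ℤ) with ha
  have hval : (w.val : ℤ) = a % (p ^ 2 : ℕ) := by
    rw [hw, ZMod.val_intCast]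
  have hsq : ((p ^ 2 : ℕ) : ℤ) = (p : ℤ) ^ 2 := by push_cast; ring
  -- w.val = a - p^2 * q
  set q : ℤ := a / ((p ^ 2 : ℕ) : ℤ) with hq
  have hwa : (w.val : ℤ) = a - ((p ^ 2 : ℕ) : ℤ) * q := by
    rw [hval, Int.emod_def]
  -- bmod z p = z
  have hzabs : -(((p:ℤ) - 1) / 2) ≤ z ∧ z ≤ ((p:ℤ) - 1) / 2 := abs_le.mp hz
  have hbz : Int.bmod z p = z := by
    rcases le_or_gt 0 z with h0 | h0
    · have hzmod : z % (p : ℤ) = z := Int.emod_eq_of_lt h0 (by omega)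
      rw [Int.bmod_pos _ _ (by rw [hzmod]; omega), hzmod]
    · have hzmod : z % (p : ℤ) = z + p := by
        have h1 : z % (p:ℤ) = (z + p) % p := by
          rw [Int.add_emod, Int.emod_self, add_zero, Int.emod_emod_of_dvd _ dvd_rfl]
        rw [h1, Int.emod_eq_of_lt (by omega) (by omega)]
      rw [Int.bmod_neg _ _ (by rw [hzmod]; omega), hzmod]; ring
  -- bmod (w.val) p = bmod z p
  have hb : Int.bmod (w.val : ℤ) p = z := by
    have : Int.bmod (w.val : ℤ) p = Int.bmod a p := by
      rw [hwa, hsq]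
      have : a - (p:ℤ)^2 * q = a + (p:ℤ) * (-((p:ℤ) * q)) := by ring
      rw [this, Int.add_mul_bmod_self_left]
    rw [this, ha]
    calc Int.bmod (z + (p : ℤ) * (m.val : ℤ)) p
        = Int.bmod z p := Int.add_mul_bmod_self_left z p _
      _ = z := hbz
  refine ⟨hb, ?_⟩
  rw [hb]
  have hdiv : ((w.val : ℤ) - z) / p = (m.val : ℤ) - (p : ℤ) * q := by
    rw [hwa, hsq, ha]
    have : z + (p:ℤ) * (m.val : ℤ) - (p:ℤ)^2 * q - z = (p:ℤ) * ((m.val : ℤ) - (p:ℤ) * q) := by ring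
    rw [this, Int.mul_ediv_cancel_left _ (by omega)]
  rw [hdiv]
  push_cast
  haveI : NeZero p := ⟨hp.pos.ne'⟩
  simp only [ZMod.natCast_self, zero_mul, sub_zero]
  exact ZMod.natCast_rightInverse m
end

section
/- Let p be an odd prime, set q = p², and let u, v be positive natural numbers. Let A : Matrix (Fin v) (Fin u) (ZMod q), let s : Fin v → ℤ, e : Fin u → ℤ, r : Fin u → ℤ, e' : ℤ, and m : ZMod p, and define (arithmetic in ZMod q with integer entries cast in): b j = ∑_i (s i) · A i j + (e j); c1 i = ∑_j A i j · (r j); c2 = ∑_j b j · (r j) + e' + p · (m.val). Assume the noise bound |∑_j e j · r j + e'| ≤ (p − 1)/2. Let d = c2 − ∑_i (s i) · c1 i ∈ ZMod q. Then decryption recovers the message: ((((d.val : ℤ) − Int.bmod ((d.val : ℤ)) p) / p : ℤ) : ZMod p) = m. -/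
open Finset

/-- Full correctness of ACPS decryption (the PKE underlying the lattice-based PVSS):
with `q = p²` for an odd prime `p`, public key `b = sᵀA + eᵀ`, ciphertext
`c1 = A·r`, `c2 = b·r + e' + p·m`, and accumulated noise `⟨e, r⟩ + e'` of absolute
value at most `(p-1)/2`, decryption `d = c2 - sᵀc1`, `f = d bmod p`, output `(d - f)/p`
recovers the message `m`. -/
theorem acps_decryption_correct
    (p u v : ℕ) (hp : p.Prime) (hodd : Odd p) (hu : 0 < u) (hv : 0 < v)
    (A : Matrix (Fin v) (Fin u) (ZMod (p ^ 2)))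
    (s : Fin v → ℤ) (e : Fin u → ℤ) (r : Fin u → ℤ) (e' : ℤ) (m : ZMod p)
    (b : Fin u → ZMod (p ^ 2))
    (hb : ∀ j, b j = ∑ i, (s i : ZMod (p ^ 2)) * A i j + (e j : ZMod (p ^ 2)))
    (c1 : Fin v → ZMod (p ^ 2))
    (hc1 : ∀ i, c1 i = ∑ j, A i j * (r j : ZMod (p ^ 2)))
    (c2 : ZMod (p ^ 2))
    (hc2 : c2 = ∑ j, b j * (r j : ZMod (p ^ 2)) + (e' : ZMod (p ^ 2))
        + (p : ZMod (p ^ 2)) * (m.val : ZMod (p ^ 2)))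
    (hnoise : |∑ j, e j * r j + e'| ≤ ((p : ℤ) - 1) / 2)
    (d : ZMod (p ^ 2))
    (hd : d = c2 - ∑ i, (s i : ZMod (p ^ 2)) * c1 i) :
    ((((d.val : ℤ) - Int.bmod (d.val : ℤ) p) / p : ℤ) : ZMod p) = m := by
  have hp0 : 0 < p := hp.pos
  haveI : NeZero (p ^ 2) := ⟨by positivity⟩
  haveI : NeZero p := ⟨hp0.ne'⟩
  set N : ℤ := ∑ j, e j * r j + e' with hN
  -- Step 1: d as a cast
  have hswap : ∑ j, (∑ i, (s i : ZMod (p ^ 2)) * A i j) * (r j : ZMod (p ^ 2))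
      = ∑ i, (s i : ZMod (p ^ 2)) * c1 i := by
    simp only [hc1, Finset.sum_mul, Finset.mul_sum]
    rw [Finset.sum_comm]
    apply Finset.sum_congr rfl; intro i _
    apply Finset.sum_congr rfl; intro j _
    ring
  have hdval : d = ((N + p * m.val : ℤ) : ZMod (p ^ 2)) := by
    rw [hd, hc2]
    simp only [hb, add_mul, Finset.sum_add_distrib, hswap]
    push_cast [hN]
    ring
  -- Step 2: extract integer k
  have h1 : ((d.val : ℤ) : ZMod (p ^ 2)) = ((N + p * m.val : ℤ) : ZMod (p ^ 2)) := by
    rw [← hdval]; simp [ZMod.intCast_cast, ZMod.intCast_zmod_cast]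
  have h2 : ((p ^ 2 : ℕ) : ℤ) ∣ ((d.val : ℤ) - (N + p * m.val)) := by
    rw [← ZMod.intCast_zmod_eq_zero_iff_dvd, Int.cast_sub, h1, sub_self]
  obtain ⟨k, hk⟩ := h2
  have hk' : (d.val : ℤ) = N + p * m.val + p ^ 2 * k := by push_cast at hk; linarith
  -- Step 3: bmod equals N
  obtain ⟨l, hl⟩ := hodd
  have hmv : m.val < p := ZMod.val_lt m
  have hb3 : Int.bmod (d.val : ℤ) p = N := by
    have hrw : (d.val : ℤ) = N + (p : ℤ) * (m.val + p * k) := by rw [hk']; ring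
    rw [hrw, Int.add_mul_bmod_self_left, Int.bmod_def]
    have hl2 : (p : ℤ) = 2 * l + 1 := by exact_mod_cast hl
    have habs := abs_le.mp hnoise
    have h1 := habs.1
    have h2 := habs.2
    have hNm : N % (p : ℤ) = if 0 ≤ N then N else N + p := by
      split
      · exact Int.emod_eq_of_lt (by assumption) (by omega)
      · have hx : (N + (p:ℤ) * 1) % p = N % p := Int.add_mul_emod_self_left _ _ _
        rw [mul_one] at hx
        rw [← hx]
        exact Int.emod_eq_of_lt (by omega) (by omega)
    rw [hNm]
    split <;> omega
  rw [hb3, hk']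
  have hdiv : (N + ↑p * ↑m.val + ↑p ^ 2 * k - N) / (p : ℤ) = m.val + p * k := by
    rw [show N + ↑p * ↑m.val + ↑p ^ 2 * k - N = (p:ℤ) * (m.val + p * k) by ring]
    rw [Int.mul_ediv_cancel_left _ (by exact_mod_cast hp0.ne')]
  rw [hdiv]
  push_cast
  simp [ZMod.natCast_val, ZMod.cast_id]
end
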